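/- Let ħ > 0, let ψ : ℝ² → ℂ² be continuously differentiable, and define n_s(r) := (1/2)·ψ(r)*σ_s ψ(r) and J_s^k(r) := (ħ/2)·Im( ψ(r)*σ_s ∂^k ψ(r) ). Then for every r ∈ ℝ², every s = 1,2,3 and every k = 1,2: 2·Σ_{i,j=1}^{3} η_{sij}·n_i(r)·J_j^k(r) = ħ·( n₀(r)·∂^k n_s(r) − n_s(r)·∂^k n₀(r) ), where η is the Levi-Civita symbol on {1,2,3}. -/

import Mathlib

open Matrix

/-- The Pauli matrices `σ₀, σ₁, σ₂, σ₃` as 2×2 complex matrices. -/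
noncomputable def pauli : Fin 4 → Matrix (Fin 2) (Fin 2) ℂ :=
  ![!![1, 0; 0, 1], !![0, 1; 1, 0], !![0, -Complex.I; Complex.I, 0], !![1, 0; 0, -1]]

/-- The Levi-Civita symbol on three indices (indexed by `Fin 3`):
totally antisymmetric with `leviCivita 0 1 2 = 1`. -/
def leviCivita (i j k : Fin 3) : ℤ :=
  ((j : ℤ) - (i : ℤ)) * ((k : ℤ) - (j : ℤ)) * ((k : ℤ) - (i : ℤ)) / 2

/-- The spinorial densities `n_s(r) := (1/2)·ψ(r)*σ_s ψ(r)` of a pure state. -/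
noncomputable def spinDensity (ψ : EuclideanSpace ℝ (Fin 2) → Fin 2 → ℂ) (s : Fin 4)
    (r : EuclideanSpace ℝ (Fin 2)) : ℝ :=
  ((1 / 2 : ℂ) * (star (ψ r) ⬝ᵥ (pauli s).mulVec (ψ r))).re

/-- The spinorial currents `J_s^k(r) := (ħ/2)·Im(ψ(r)*σ_s ∂^k ψ(r))` of a pure state. -/
noncomputable def spinCurrent (hbar : ℝ) (ψ : EuclideanSpace ℝ (Fin 2) → Fin 2 → ℂ)
    (s : Fin 4) (k : Fin 2) (r : EuclideanSpace ℝ (Fin 2)) : ℝ :=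
  (hbar / 2) * (star (ψ r) ⬝ᵥ (pauli s).mulVec
      (fun i => fderiv ℝ (fun y => ψ y i) r (EuclideanSpace.single k 1))).im

/-! The derivative of `n_s = ½ ψ*σ_sψ` is `Re (ψ*σ_s ∂ψ)` because `σ_s` is Hermitian, so the
identity is a pointwise one between `ψ` and `φ = ∂ψ`. It comes from the Fierz identity
`ψψ* = Σ_μ n_μ σ_μ` and `[σ_i, σ_s] = 2i Σ_k η_{isk} σ_k`: comparing
`2n_0 ψ*σ_sφ = Σ_μ n_μ ψ*σ_μσ_sφ` with `2n_s ψ*φ = Σ_μ n_μ ψ*σ_sσ_μφ` gives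
`n_0 ψ*σ_sφ - n_s ψ*φ = i Σ η_{isk} n_i ψ*σ_kφ`, whose real part is the claim. The
polynomial identity itself is verified by expanding in the components of `ψ` and `φ`. -/

theorem Matrix.IsHermitian.star_dotProduct_mulVec_eq_star {n α : Type*} [Fintype n]
    [CommSemiring α] [StarRing α] {M : Matrix n n α} (hM : M.IsHermitian) (u w : n → α) :
    star w ⬝ᵥ M *ᵥ u = star (star u ⬝ᵥ M *ᵥ w) := by
  rw [← star_dotProduct_star, star_mulVec, star_star, ← dotProduct_mulVec, hM.eq]

theorem fderiv_re_star_dotProduct_mulVec {E n : Type*} [NormedAddCommGroup E] [NormedSpace ℝ E]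
    [Fintype n] {M : Matrix n n ℂ} (hM : M.IsHermitian) {f : E → n → ℂ} {r : E}
    (hf : ∀ i, DifferentiableAt ℝ (fun y => f y i) r) (v : E) :
    fderiv ℝ (fun y => (star (f y) ⬝ᵥ M *ᵥ f y).re) r v
      = 2 * (star (f r) ⬝ᵥ M *ᵥ fun i => fderiv ℝ (fun y => f y i) r v).re := by
  have hq := HasFDerivAt.fun_sum (u := Finset.univ) fun i _ => (hf i).hasFDerivAt.star.fun_mul
    (HasFDerivAt.fun_sum (u := Finset.univ) fun j _ => (hf j).hasFDerivAt.const_mul (M i j))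
  have h : HasFDerivAt (fun y => (star (f y) ⬝ᵥ M *ᵥ f y).re) (Complex.reCLM.comp _) r :=
    Complex.reCLM.hasFDerivAt.comp r hq
  set w := fun i => fderiv ℝ (fun y => f y i) r v
  have product_rule : fderiv ℝ (fun y => (star (f y) ⬝ᵥ M *ᵥ f y).re) r v
      = (star (f r) ⬝ᵥ M *ᵥ w + star w ⬝ᵥ M *ᵥ f r).re := by
    rw [h.fderiv]
    simp [dotProduct, mulVec, Finset.sum_add_distrib, w, mul_comm]
  rw [product_rule, hM.star_dotProduct_mulVec_eq_star, Complex.add_re, Complex.star_def,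
    Complex.conj_re]
  ring

theorem pauli_isHermitian (s : Fin 4) : (pauli s).IsHermitian := by
  ext i j
  fin_cases s <;> fin_cases i <;> fin_cases j <;> simp [pauli]

theorem sum_leviCivita_mul_re_mul_im (u w : Fin 2 → ℂ) (s : Fin 3) :
    ∑ i, ∑ j, (leviCivita s i j : ℝ) * (star u ⬝ᵥ pauli i.succ *ᵥ u).re
        * (star u ⬝ᵥ pauli j.succ *ᵥ w).im
      = (star u ⬝ᵥ pauli 0 *ᵥ u).re * (star u ⬝ᵥ pauli s.succ *ᵥ w).re
        - (star u ⬝ᵥ pauli s.succ *ᵥ u).re * (star u ⬝ᵥ pauli 0 *ᵥ w).re := by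
  fin_cases s <;>
  · simp [Fin.sum_univ_succ, leviCivita, pauli, dotProduct, mulVec, Fin.succ]
    ring

theorem spinDensity_eq_re_div_two (ψ : EuclideanSpace ℝ (Fin 2) → Fin 2 → ℂ) (s : Fin 4)
    (r : EuclideanSpace ℝ (Fin 2)) :
    spinDensity ψ s r = (star (ψ r) ⬝ᵥ pauli s *ᵥ ψ r).re / 2 := by
  simp [spinDensity, div_eq_inv_mul]

theorem fderiv_spinDensity {ψ : EuclideanSpace ℝ (Fin 2) → Fin 2 → ℂ}
    {r : EuclideanSpace ℝ (Fin 2)} (hψ : ∀ i, DifferentiableAt ℝ (fun y => ψ y i) r) (s : Fin 4)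
    (v : EuclideanSpace ℝ (Fin 2)) :
    fderiv ℝ (fun y => spinDensity ψ s y) r v
      = (star (ψ r) ⬝ᵥ pauli s *ᵥ fun i => fderiv ℝ (fun y => ψ y i) r v).re := by
  have hM : ((1 / 2 : ℂ) • pauli s).IsHermitian :=
    (pauli_isHermitian s).smul (by simp [IsSelfAdjoint])
  have h := fderiv_re_star_dotProduct_mulVec hM hψ v
  simp only [smul_mulVec, dotProduct_smul, smul_eq_mul] at h
  unfold spinDensity
  rw [h]
  simp

theorem pure_state_orthogonal_current_identity_general (hbar : ℝ)
    (ψ : EuclideanSpace ℝ (Fin 2) → Fin 2 → ℂ) (hψ : ContDiff ℝ 1 ψ) :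
    ∀ (r : EuclideanSpace ℝ (Fin 2)) (s : Fin 3) (k : Fin 2),
      2 * ∑ i : Fin 3, ∑ j : Fin 3,
          (leviCivita s i j : ℝ) * spinDensity ψ i.succ r * spinCurrent hbar ψ j.succ k r
        = hbar * (spinDensity ψ 0 r
              * fderiv ℝ (fun y => spinDensity ψ s.succ y) r (EuclideanSpace.single k 1)
            - spinDensity ψ s.succ r
              * fderiv ℝ (fun y => spinDensity ψ 0 y) r (EuclideanSpace.single k 1)) := by
  intro r s k
  have hψr : ∀ i, DifferentiableAt ℝ (fun y => ψ y i) r := fun i =>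
    differentiableAt_pi.mp (hψ.differentiable one_ne_zero r) i
  set φ := fun i => fderiv ℝ (fun y => ψ y i) r (EuclideanSpace.single k 1)
  rw [fderiv_spinDensity hψr, fderiv_spinDensity hψr]
  simp only [spinCurrent, spinDensity_eq_re_div_two]
  calc _ = hbar / 2 * ∑ i, ∑ j, (leviCivita s i j : ℝ) * (star (ψ r) ⬝ᵥ pauli i.succ *ᵥ ψ r).re
        * (star (ψ r) ⬝ᵥ pauli j.succ *ᵥ φ).im := by
        rw [Finset.mul_sum, Finset.mul_sum]
        refine Finset.sum_congr rfl fun i _ => ?_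
        rw [Finset.mul_sum, Finset.mul_sum]
        refine Finset.sum_congr rfl fun j _ => ?_
        ring
    _ = _ := by
        rw [sum_leviCivita_mul_re_mul_im]
        ring

/-- For a continuously differentiable pure state `ψ : ℝ² → ℂ²`, for every `r`, every
`s = 1,2,3` (here `s : Fin 3` labels `s+1`) and every `k = 1,2`:
`2·Σ_{i,j=1}^{3} η_{sij}·n_i(r)·J_j^k(r) = ħ·(n₀(r)·∂^k n_s(r) − n_s(r)·∂^k n₀(r))`. -/
theorem pure_state_orthogonal_current_identity (hbar : ℝ) (hbar_pos : 0 < hbar)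
    (ψ : EuclideanSpace ℝ (Fin 2) → Fin 2 → ℂ) (hψ : ContDiff ℝ 1 ψ) :
    ∀ (r : EuclideanSpace ℝ (Fin 2)) (s : Fin 3) (k : Fin 2),
      2 * ∑ i : Fin 3, ∑ j : Fin 3,
          (leviCivita s i j : ℝ) * spinDensity ψ i.succ r * spinCurrent hbar ψ j.succ k r
        = hbar * (spinDensity ψ 0 r
              * fderiv ℝ (fun y => spinDensity ψ s.succ y) r (EuclideanSpace.single k 1)
            - spinDensity ψ s.succ r
              * fderiv ℝ (fun y => spinDensity ψ 0 y) r (EuclideanSpace.single k 1)) :=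
  pure_state_orthogonal_current_identity_general hbar ψ hψ
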